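/- For every even integer k ≥ 2, lcm(A(2k,1), A'(2k,1)) = (1/2) F_{k+1} F_k L_{k+2} L_{k+1} L_{k−1}, where A(m,1) := ∑_{n=1}^{F_m − 1} ⌊φ n⌋ and A'(m,1) := ∑_{n=1}^{F_m − 1} ⌊φ² n⌋. -/

import Mathlib

def lucas : ℕ → ℕ
  | 0 => 2
  | 1 => 1
  | n + 2 => lucas (n + 1) + lucas n

noncomputable def A (m : ℕ) : ℤ := ∑ n ∈ Finset.Icc 1 (Nat.fib m - 1), ⌊(1 + Real.sqrt 5) / 2 * (n : ℝ)⌋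

noncomputable def A' (m : ℕ) : ℤ :=
  ∑ n ∈ Finset.Icc 1 (Nat.fib m - 1), ⌊((1 + Real.sqrt 5) / 2) ^ 2 * (n : ℝ)⌋

/-!
For even `m` we have `φ F_m = F_{m+1} - ψ^m` with `0 < ψ^m = φ^{-m}`. For `0 ≤ n < F_m` and
`p = ⌊φ n⌋ + 1` the integer `p² - p n - n² = (p - φ n)(p - ψ n)` is positive, hence at least `1`,
while `p - ψ n < φ^m`; so `p - φ n > ψ^m`, i.e. `⌊φ n⌋ + ⌊φ (F_m - n)⌋ = F_{m+1} - 1`. Pairing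
`n` with `F_m - n` gives `2 A(m) = (F_m - 1)(F_{m+1} - 1)`, and `φ² = φ + 1` gives
`2 A'(m) = 2 A(m) + (F_m - 1) F_m = (F_m - 1)(F_{m+2} - 1)`.

For even `k`, Cassini's identity factors `F_{2k} - 1 = F_{k+1} L_{k-1}`,
`F_{2k+1} - 1 = F_k L_{k+1}` and `F_{2k+2} - 1 = F_k L_{k+2}`. The common factor
`F_{k+1} F_k L_{k-1}` is even (`3` divides one of `k - 1, k, k + 1`) and consecutive Lucas
numbers are coprime, which determines the lcm.
-/

open Finset Real
open Nat (fib Coprime)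
open scoped goldenRatio

theorem lucas_add_fib (n : ℕ) : lucas n + fib n = 2 * fib (n + 1) := by
  induction n using Nat.twoStepInduction with
  | zero => rfl
  | one => rfl
  | more n ih₀ ih₁ =>
    rw [lucas, Nat.fib_add_two, Nat.fib_add_two (n := n + 1)]
    linarith

theorem lucas_eq_two_mul_fib_succ_sub_fib (n : ℕ) : (lucas n : ℤ) = 2 * fib (n + 1) - fib n := by
  have := lucas_add_fib n
  omega

theorem lucas_coprime_lucas_succ (n : ℕ) : Coprime (lucas n) (lucas (n + 1)) := by
  induction n with
  | zero => decide
  | succ n ih => simpa [lucas, Nat.coprime_add_self_right] using ih.symm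

theorem two_dvd_lucas_iff {n : ℕ} : 2 ∣ lucas n ↔ 2 ∣ fib n := by
  have := lucas_add_fib n
  omega

theorem two_dvd_fib_of_three_dvd {n : ℕ} (h : 3 ∣ n) : 2 ∣ fib n :=
  Nat.fib_dvd 3 n h

theorem two_dvd_fib_succ_mul_fib_mul_lucas_pred (k : ℕ) :
    2 ∣ fib (k + 1) * fib k * lucas (k - 1) := by
  rcases (by omega : 3 ∣ k + 1 ∨ 3 ∣ k ∨ 3 ∣ k - 1) with h | h | h
  · exact (two_dvd_fib_of_three_dvd h).mul_right _ |>.mul_right _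
  · exact (two_dvd_fib_of_three_dvd h).mul_left _ |>.mul_right _
  · exact (two_dvd_lucas_iff.2 (two_dvd_fib_of_three_dvd h)).mul_left _

theorem fib_succ_sq_sub_fib_succ_mul_fib_sub_fib_sq_of_even {k : ℕ} (hk : Even k) :
    (fib (k + 1) : ℤ) ^ 2 - fib (k + 1) * fib k - fib k ^ 2 = 1 := by
  have h := Int.fib_succ_mul_fib_pred_sub_fib_sq (k + 1)
  rw [add_sub_cancel_right, show (k : ℤ) + 1 + 1 = (k + 2 : ℕ) by push_cast; ring,
    show (k : ℤ) + 1 = (k + 1 : ℕ) by push_cast; ring] at h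
  simp only [Int.fib_natCast, Nat.fib_add_two, Int.natAbs_natCast, (hk.add_one).neg_one_pow] at h
  push_cast at h
  linear_combination -h

theorem fib_two_mul_sub_one_of_even {k : ℕ} (hk : Even k) (hk0 : k ≠ 0) :
    fib (2 * k) - 1 = fib (k + 1) * lucas (k - 1) := by
  obtain ⟨j, rfl⟩ := Nat.exists_eq_add_one_of_ne_zero hk0
  have hc := fib_succ_sq_sub_fib_succ_mul_fib_sub_fib_sq_of_even hk
  rw [show 2 * (j + 1) = 2 * j + 2 by ring, add_tsub_cancel_right]
  refine Nat.sub_eq_of_eq_add (Nat.cast_injective (R := ℤ) ?_)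
  rw [Nat.fib_add_two] at hc
  push_cast [Nat.fib_two_mul_add_two, lucas_eq_two_mul_fib_succ_sub_fib, Nat.fib_add_two] at hc ⊢
  linear_combination hc

theorem fib_two_mul_add_one_sub_one_of_even {k : ℕ} (hk : Even k) :
    fib (2 * k + 1) - 1 = fib k * lucas (k + 1) := by
  have hc := fib_succ_sq_sub_fib_succ_mul_fib_sub_fib_sq_of_even hk
  refine Nat.sub_eq_of_eq_add (Nat.cast_injective (R := ℤ) ?_)
  push_cast [Nat.fib_two_mul_add_one, lucas_eq_two_mul_fib_succ_sub_fib, Nat.fib_add_two] at hc ⊢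
  linear_combination hc

theorem fib_two_mul_add_two_sub_one_of_even {k : ℕ} (hk : Even k) :
    fib (2 * k + 2) - 1 = fib k * lucas (k + 2) := by
  have hc := fib_succ_sq_sub_fib_succ_mul_fib_sub_fib_sq_of_even hk
  refine Nat.sub_eq_of_eq_add (Nat.cast_injective (R := ℤ) ?_)
  push_cast [Nat.fib_two_mul_add_two, lucas_eq_two_mul_fib_succ_sub_fib, Nat.fib_add_two] at hc ⊢
  linear_combination hc

theorem one_le_mul_sub_goldenRatio_mul_sub_goldenConj {p : ℤ} {n : ℕ} (h : φ * n < p) :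
    1 ≤ (p - φ * n) * (p - ψ * n) := by
  have hnorm : (p - φ * n) * (p - ψ * n) = ((p ^ 2 - p * n - n ^ 2 : ℤ) : ℝ) := by
    push_cast
    linear_combination
      (-(p : ℝ) * n) * goldenRatio_add_goldenConj + (n : ℝ) ^ 2 * goldenRatio_mul_goldenConj
  have hpos : 0 < (p - φ * n) * (p - ψ * n) :=
    mul_pos (by linarith)
      (by nlinarith [goldenConj_neg, goldenRatio_pos, (Nat.cast_nonneg n : (0 : ℝ) ≤ n)])
  rw [hnorm] at hpos ⊢
  exact_mod_cast Int.cast_pos.mp hpos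

theorem sqrt_five_mul_fib (m : ℕ) : √5 * fib m = φ ^ m - ψ ^ m := by
  rw [← goldenRatio_sub_goldenConj]
  linear_combination fib_succ_sub_goldenConj_mul_fib m - fib_succ_sub_goldenRatio_mul_fib m

theorem goldenRatio_mul_add_goldenConj_pow_lt_floor_add_one {m n : ℕ} (hm : Even m)
    (hn : n < fib m) : φ * n + ψ ^ m < ⌊φ * n⌋ + 1 := by
  set p : ℤ := ⌊φ * n⌋ + 1 with hp
  have hφn_lt : φ * n < p := by push_cast [hp]; exact Int.lt_floor_add_one _
  have hp_le : (p : ℝ) ≤ φ * n + 1 := by push_cast [hp]; linarith [Int.floor_le (φ * n)]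
  have hψm : 0 < ψ ^ m := hm.pow_pos goldenConj_ne_zero
  have hφψ : φ ^ m * ψ ^ m = 1 := by rw [← mul_pow, goldenRatio_mul_goldenConj, hm.neg_one_pow]
  have hn' : (n : ℝ) + 1 ≤ fib m := by exact_mod_cast hn
  have hconj_lt : p - ψ * n < φ ^ m := by
    have h5 : 1 < √5 := (Real.lt_sqrt zero_le_one).2 (by norm_num)
    calc p - ψ * n ≤ √5 * n + 1 := by rw [← goldenRatio_sub_goldenConj]; linarith
      _ < √5 * fib m := by nlinarith
      _ ≤ φ ^ m := by rw [sqrt_five_mul_fib]; linarith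
  have hgap : 1 < (p - φ * n) * φ ^ m :=
    (one_le_mul_sub_goldenRatio_mul_sub_goldenConj hφn_lt).trans_lt
      (mul_lt_mul_of_pos_left hconj_lt (by linarith))
  have : ψ ^ m < p - φ * n := calc
    ψ ^ m = ψ ^ m * 1 := (mul_one _).symm
    _ < ψ ^ m * ((p - φ * n) * φ ^ m) := mul_lt_mul_of_pos_left hgap hψm
    _ = p - φ * n := by linear_combination (p - φ * n) * hφψ
  push_cast [hp] at this
  linarith

theorem floor_goldenRatio_mul_add_floor_goldenRatio_mul_sub {m n : ℕ} (hm : Even m)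
    (hn : n < fib m) : ⌊φ * n⌋ + ⌊φ * ↑(fib m - n)⌋ = fib (m + 1) - 1 := by
  have hlt := goldenRatio_mul_add_goldenConj_pow_lt_floor_add_one hm hn
  have hψm : 0 < ψ ^ m := hm.pow_pos goldenConj_ne_zero
  have hval : φ * ↑(fib m - n) = fib (m + 1) - ψ ^ m - φ * n := by
    rw [Nat.cast_sub hn.le]
    linear_combination -fib_succ_sub_goldenRatio_mul_fib m
  rw [← eq_sub_iff_add_eq', Int.floor_eq_iff, hval]
  push_cast
  constructor <;> linarith [Int.floor_le (φ * n)]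

theorem two_nsmul_sum_Icc_eq_of_add_reflect {M : Type*} [AddCommMonoid M] {N : ℕ} {f : ℕ → M}
    {c : M} (h : ∀ n ∈ Icc 1 (N - 1), f n + f (N - n) = c) :
    2 • ∑ n ∈ Icc 1 (N - 1), f n = (N - 1) • c := by
  have hreflect : ∑ n ∈ Icc 1 (N - 1), f (N - n) = ∑ n ∈ Icc 1 (N - 1), f n :=
    sum_nbij' (N - ·) (N - ·) (by simp only [mem_Icc]; omega) (by simp only [mem_Icc]; omega)
      (by simp only [mem_Icc]; omega) (by simp only [mem_Icc]; omega) (fun _ _ ↦ rfl)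
  rw [two_nsmul, ← congrArg (_ + ·) hreflect, ← sum_add_distrib, sum_congr rfl h, sum_const,
    Nat.card_Icc, Nat.add_sub_cancel]

theorem two_mul_A {m : ℕ} (hm : Even m) : 2 * A m = ((fib m - 1) * (fib (m + 1) - 1) : ℕ) := by
  have h := two_nsmul_sum_Icc_eq_of_add_reflect (N := fib m) (c := (fib (m + 1) : ℤ) - 1)
    (f := fun n ↦ ⌊φ * n⌋) fun n hn ↦
      floor_goldenRatio_mul_add_floor_goldenRatio_mul_sub hm (by simp only [mem_Icc] at hn; omega)
  rw [nsmul_eq_mul, nsmul_eq_mul] at h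
  rw [A, Nat.cast_mul, Nat.cast_sub (Nat.fib_pos.2 m.succ_pos)]
  exact_mod_cast h

theorem A'_eq_A_add_sum (m : ℕ) : A' m = A m + ∑ n ∈ Icc 1 (fib m - 1), (n : ℤ) := by
  rw [A', A, ← sum_add_distrib]
  refine sum_congr rfl fun n _ ↦ ?_
  rw [← Int.floor_add_natCast, ← goldenRatio, goldenRatio_sq]
  ring_nf

theorem two_mul_A' {m : ℕ} (hm : Even m) : 2 * A' m = ((fib m - 1) * (fib (m + 2) - 1) : ℕ) := by
  have hgauss := two_nsmul_sum_Icc_eq_of_add_reflect (N := fib m) (c := (fib m : ℤ))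
    (f := fun n ↦ (n : ℤ)) fun n hn ↦ by
      simp only [mem_Icc] at hn
      push_cast [Nat.cast_sub (by omega : n ≤ fib m)]
      ring
  have hfib : 0 < fib (m + 1) := Nat.fib_pos.2 m.succ_pos
  rw [nsmul_eq_mul, nsmul_eq_mul, Nat.cast_ofNat] at hgauss
  rw [A'_eq_A_add_sum, mul_add, two_mul_A hm, hgauss, Nat.fib_add_two]
  norm_cast
  rw [← mul_add]
  congr 1
  omega

theorem two_mul_lcm_eq_of_two_mul_eq {a a' : ℤ} {c u v : ℕ} (hc : 2 ∣ c) (huv : Coprime u v)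
    (ha : 2 * a = c * u) (ha' : 2 * a' = c * v) : 2 * Int.lcm a a' = c * (u * v) := by
  obtain ⟨b, rfl⟩ := hc
  obtain rfl : a = (b * u : ℕ) := mul_left_cancel₀ two_ne_zero (by push_cast at ha ⊢; linarith)
  obtain rfl : a' = (b * v : ℕ) := mul_left_cancel₀ two_ne_zero (by push_cast at ha' ⊢; linarith)
  rw [Int.lcm_natCast_natCast, Nat.lcm_mul_left, huv.lcm_eq_mul, mul_assoc]

theorem two_mul_A_two_mul {k : ℕ} (hk : Even k) (hk0 : k ≠ 0) :
    2 * A (2 * k) = (fib (k + 1) * fib k * lucas (k - 1) : ℕ) * lucas (k + 1) := by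
  rw [two_mul_A (even_two_mul k), fib_two_mul_sub_one_of_even hk hk0,
    fib_two_mul_add_one_sub_one_of_even hk]
  push_cast
  ring

theorem two_mul_A'_two_mul {k : ℕ} (hk : Even k) (hk0 : k ≠ 0) :
    2 * A' (2 * k) = (fib (k + 1) * fib k * lucas (k - 1) : ℕ) * lucas (k + 2) := by
  rw [two_mul_A' (even_two_mul k), fib_two_mul_sub_one_of_even hk hk0,
    fib_two_mul_add_two_sub_one_of_even hk]
  push_cast
  ring

theorem lcm_A_even (k : ℕ) (hk : 2 ≤ k) (hke : Even k) :
    (Int.lcm (A (2 * k)) (A' (2 * k)) : ℝ) =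
      (1 / 2) * (Nat.fib (k + 1) : ℝ) * (Nat.fib k : ℝ) * (lucas (k + 2) : ℝ) *
        (lucas (k + 1) : ℝ) * (lucas (k - 1) : ℝ) := by
  have hk0 : k ≠ 0 := by omega
  have h := two_mul_lcm_eq_of_two_mul_eq (two_dvd_fib_succ_mul_fib_mul_lucas_pred k)
    (lucas_coprime_lucas_succ (k + 1)) (two_mul_A_two_mul hke hk0) (two_mul_A'_two_mul hke hk0)
  have hR : 2 * (Int.lcm (A (2 * k)) (A' (2 * k)) : ℝ) =
      fib (k + 1) * fib k * lucas (k - 1) * (lucas (k + 1) * lucas (k + 2)) := by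
    exact_mod_cast h
  linear_combination hR / 2
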